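/- arXiv:1603.01101 — 4 statements merged into one kernel-verified Lean document; each statement's English description precedes it below -/
import Mathlib

section
/- For every Young (N-)function Φ, defining Λ_Φ(s) := inf{t > 0 : (1/t)Φ'(1/t) ≤ 1/s} for s > 0, one has Λ_Φ(s) ≤ 2 / Φ^{-1}(1/s) for all s > 0, and consequently Λ_Φ(s) → 0 as s → 0+. -/
open MeasureTheory Set Filter

/-- For an N-function `Φ(x) = ∫₀^|x| u`, with
`Λ_Φ(s) = inf {t > 0 : (1/t) Φ'(1/t) ≤ 1/s}`, one has
`Λ_Φ(s) ≤ 2 / Φ⁻¹(1/s)` for all `s > 0`, and hence `Λ_Φ(s) → 0` as `s → 0+`. -/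
theorem stmt2 (u : ℝ → ℝ)
    (hu_mono : MonotoneOn u (Ici 0)) (hu0 : u 0 = 0)
    (hu_pos : ∀ t > (0 : ℝ), 0 < u t)
    (hu_rc : ∀ t ≥ (0 : ℝ), ContinuousWithinAt u (Ici t) t)
    (hu_inf : Tendsto u atTop atTop)
    (hu_int : ∀ x ≥ (0 : ℝ), IntervalIntegrable u volume 0 x)
    (Φ : ℝ → ℝ) (hΦ : ∀ x, Φ x = ∫ t in (0 : ℝ)..|x|, u t)
    (Λ ΦInv : ℝ → ℝ)
    (hΛ : ∀ s > (0 : ℝ), Λ s = sInf {t : ℝ | 0 < t ∧ (1 / t) * u (1 / t) ≤ 1 / s})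
    (hΦInv : ∀ y ≥ (0 : ℝ), ΦInv y = sInf {x : ℝ | 0 ≤ x ∧ y ≤ Φ x}) :
    (∀ s > (0 : ℝ), Λ s ≤ 2 / ΦInv (1 / s)) ∧
      Tendsto Λ (nhdsWithin 0 (Ioi 0)) (nhds 0) := by
  have hu_nonneg : ∀ t, 0 ≤ t → 0 ≤ u t := fun t ht =>
    hu0 ▸ hu_mono (self_mem_Ici) ht ht
  have hint : ∀ a b : ℝ, 0 ≤ a → a ≤ b → IntervalIntegrable u volume a b := by
    intro a b ha hab
    refine (hu_int b (ha.trans hab)).mono_set ?_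
    rw [Set.uIcc_of_le hab, Set.uIcc_of_le (ha.trans hab)]
    exact Icc_subset_Icc ha le_rfl
  have hΦx : ∀ x : ℝ, 0 ≤ x → Φ x = ∫ t in (0:ℝ)..x, u t := by
    intro x hx; rw [hΦ, abs_of_nonneg hx]
  have hΦ_ge : ∀ b x : ℝ, 0 ≤ b → b ≤ x → (x - b) * u b ≤ Φ x := by
    intro b x hb hbx
    have hx : (0:ℝ) ≤ x := hb.trans hbx
    rw [hΦx x hx, ← intervalIntegral.integral_add_adjacent_intervals (hu_int b hb)
      (hint b x hb hbx)]
    have h1 : 0 ≤ ∫ t in (0:ℝ)..b, u t :=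
      intervalIntegral.integral_nonneg hb (fun t ht => hu_nonneg t ht.1)
    have h2 : (x - b) * u b ≤ ∫ t in b..x, u t := by
      have := intervalIntegral.integral_mono_on hbx (intervalIntegrable_const (c := u b))
        (hint b x hb hbx) (fun t ht => hu_mono hb (hb.trans ht.1) ht.1)
      simpa [mul_comm] using this
    linarith
  have hΦ_le : ∀ x : ℝ, 0 ≤ x → Φ x ≤ x * u x := by
    intro x hx
    rw [hΦx x hx]
    have := intervalIntegral.integral_mono_on hx (hu_int x hx)
      (intervalIntegrable_const (c := u x)) (fun t ht => hu_mono ht.1 hx ht.2)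
    simpa [mul_comm] using this
  have hΦ_mono : ∀ x y : ℝ, 0 ≤ x → x ≤ y → Φ x ≤ Φ y := by
    intro x y hx hxy
    rw [hΦx x hx, hΦx y (hx.trans hxy),
      ← intervalIntegral.integral_add_adjacent_intervals (hu_int x hx) (hint x y hx hxy)]
    have h2 : 0 ≤ ∫ t in x..y, u t :=
      intervalIntegral.integral_nonneg hxy (fun t ht => hu_nonneg t (hx.trans ht.1))
    linarith
  have hu1 : 0 < u 1 := hu_pos 1 one_pos
  have hS_ne : ∀ y : ℝ, {x : ℝ | 0 ≤ x ∧ y ≤ Φ x}.Nonempty := by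
    intro y
    refine ⟨max 1 (1 + y / u 1), le_trans zero_le_one (le_max_left _ _), ?_⟩
    have h := hΦ_ge 1 (max 1 (1 + y / u 1)) zero_le_one (le_max_left _ _)
    have h2 : y / u 1 ≤ max 1 (1 + y / u 1) - 1 := by
      have := le_max_right 1 (1 + y / u 1); linarith
    have h3 : y = (y / u 1) * u 1 := by field_simp
    have h4 : (y / u 1) * u 1 ≤ (max 1 (1 + y / u 1) - 1) * u 1 :=
      mul_le_mul_of_nonneg_right h2 hu1.le
    linarith
  have hSbdd : ∀ y : ℝ, BddBelow {x : ℝ | 0 ≤ x ∧ y ≤ Φ x} := fun y =>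
    ⟨0, fun x hx => hx.1⟩
  -- the key pointwise facts
  have key : ∀ s : ℝ, 0 < s → 0 < ΦInv (1/s) ∧ Λ s ≤ 2 / ΦInv (1/s) ∧ 0 ≤ Λ s := by
    intro s hs
    have hs1 : (0:ℝ) < 1/s := by positivity
    set S := {x : ℝ | 0 ≤ x ∧ 1/s ≤ Φ x} with hS
    have ha : ΦInv (1/s) = sInf S := hΦInv _ hs1.le
    have ha0 : 0 ≤ sInf S := le_csInf (hS_ne _) (fun x hx => hx.1)
    have hapos : 0 < sInf S := by
      rcases lt_or_eq_of_le ha0 with h | h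
      · exact h
      exfalso
      set ε := min 1 (1/(2*s) / u 1) with hε
      have hεpos : 0 < ε := by
        apply lt_min one_pos; positivity
      obtain ⟨x, hxS, hxε⟩ := exists_lt_of_csInf_lt (hS_ne (1/s)) (h ▸ hεpos)
      have hx0 : 0 ≤ x := hxS.1
      have hx1 : x ≤ 1 := le_of_lt (lt_of_lt_of_le hxε (min_le_left _ _))
      have hux : u x ≤ u 1 := hu_mono hx0 (Set.mem_Ici.mpr zero_le_one) hx1
      have h1 : Φ x ≤ x * u x := hΦ_le x hx0
      have h2 : x * u x ≤ ε * u 1 := by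
        have := hu_nonneg x hx0
        nlinarith
      have h3 : ε * u 1 ≤ 1/(2*s) := by
        have := min_le_right 1 (1/(2*s) / u 1)
        calc ε * u 1 ≤ (1/(2*s) / u 1) * u 1 := mul_le_mul_of_nonneg_right this hu1.le
          _ = 1/(2*s) := div_mul_cancel₀ _ hu1.ne'
      have := hxS.2
      have : 1/s ≤ 1/(2*s) := by linarith
      rw [one_div, one_div] at this
      have h2s : s < 2 * s := by linarith
      exact absurd this (not_le.mpr (inv_strictAnti₀ hs h2s))
    set a := sInf S with haS
    have ha2 : 0 < a/2 := by linarith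
    -- (a/2) * u (a/2) ≤ 1/s
    have hkey : (a/2) * u (a/2) ≤ 1/s := by
      by_contra hcon
      push_neg at hcon
      have hua : 0 < u (a/2) := hu_pos _ ha2
      have hd : (1/s) / u (a/2) < a/2 :=
        (div_lt_iff₀ hua).mpr (by linarith [mul_comm (a/2) (u (a/2))])
      have hd0 : 0 ≤ (1/s) / u (a/2) := div_nonneg hs1.le hua.le
      have hxa : a/2 + (1/s) / u (a/2) < a := by linarith
      have hxnot : a/2 + (1/s) / u (a/2) ∉ S := notMem_of_lt_csInf hxa (hSbdd _)
      have hΦxlt : Φ (a/2 + (1/s) / u (a/2)) < 1/s := by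
        by_contra hge'
        push_neg at hge'
        exact hxnot ⟨by linarith, hge'⟩
      have hge : (a/2 + (1/s) / u (a/2) - a/2) * u (a/2) ≤ Φ (a/2 + (1/s) / u (a/2)) :=
        hΦ_ge (a/2) _ ha2.le (by linarith)
      have heq : (a/2 + (1/s) / u (a/2) - a/2) * u (a/2) = 1/s := by
        have h' : a/2 + (1/s) / u (a/2) - a/2 = (1/s) / u (a/2) := by ring
        rw [h', div_mul_cancel₀ _ hua.ne']
      linarith
    -- membership of 2/a in the Λ-set
    have hmem : (2/a) ∈ {t : ℝ | 0 < t ∧ (1 / t) * u (1 / t) ≤ 1 / s} := by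
      constructor
      · positivity
      · rw [one_div_div]
        exact hkey
    have hΛs : Λ s = sInf {t : ℝ | 0 < t ∧ (1 / t) * u (1 / t) ≤ 1 / s} := hΛ s hs
    refine ⟨ha ▸ hapos, ?_, ?_⟩
    · rw [hΛs, ha]
      exact csInf_le ⟨0, fun t ht => ht.1.le⟩ hmem
    · rw [hΛs]
      exact le_csInf ⟨2/a, hmem⟩ (fun t ht => ht.1.le)
  refine ⟨fun s hs => (key s hs).2.1, ?_⟩
  -- ΦInv (1/s) → ∞
  have h1s : Tendsto (fun s : ℝ => 1/s) (nhdsWithin 0 (Ioi 0)) atTop := by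
    simpa [one_div] using tendsto_inv_nhdsGT_zero
  have hΦInv_top : Tendsto (fun s : ℝ => ΦInv (1/s)) (nhdsWithin 0 (Ioi 0)) atTop := by
    rw [tendsto_atTop]
    intro M
    set M' := max M 1 with hM'
    have hM'0 : (0:ℝ) ≤ M' := le_trans zero_le_one (le_max_right _ _)
    filter_upwards [h1s.eventually (eventually_gt_atTop (Φ M')), self_mem_nhdsWithin]
      with s hΦlt hs0
    have hs : (0:ℝ) < s := hs0
    rw [hΦInv _ (by positivity : (0:ℝ) ≤ 1/s)]
    refine le_trans (le_max_left M 1) (le_csInf (hS_ne _) ?_)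
    intro x hx
    by_contra hlt
    push_neg at hlt
    have := hΦ_mono x M' hx.1 hlt.le
    linarith [hx.2]
  have hupper : Tendsto (fun s : ℝ => 2 / ΦInv (1/s)) (nhdsWithin 0 (Ioi 0)) (nhds 0) :=
    Tendsto.div_atTop tendsto_const_nhds hΦInv_top
  refine tendsto_of_tendsto_of_tendsto_of_le_of_le' tendsto_const_nhds hupper ?_ ?_
  · filter_upwards [self_mem_nhdsWithin] with s hs
    exact (key s hs).2.2
  · filter_upwards [self_mem_nhdsWithin] with s hs
    exact (key s hs).2.1
end

section
/- For every ψ ∈ L¹ on the circle, ∫_{-π}^{π} (1 − cos ψ̃(θ)) dθ ≤ 2K₀ ‖ψ‖_{L¹}, where K₀ = (K/2) ∫₀^π (sin λ)/λ dλ and K is the Kolmogorov weak (1,1) constant of the conjugation operator. -/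
/-!
Since `1 - cos u ≤ ∫₀^{|u|} sin (min t π) dt`, the layer-cake formula bounds the left-hand side
by `∫₀^π sin λ · |{|ψ̃| ≥ λ}| dλ`, and the weak (1,1) bound `|{|ψ̃| ≥ λ}| ≤ K ‖ψ‖₁ / λ` turns
this into `K ‖ψ‖₁ ∫₀^π sin λ / λ dλ`. The sign of `K` matters: its denominator is an
alternating series with decreasing terms, hence nonnegative.
-/

open MeasureTheory Set

/-- Kolmogorov's best weak-(1,1) constant
`K = (1 + 3⁻² + 5⁻² + ⋯)/(1 − 3⁻² + 5⁻² − ⋯)`. -/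
noncomputable def kolmogorovK : ℝ :=
  (∑' n : ℕ, (1 : ℝ) / (2 * (n : ℝ) + 1) ^ 2) /
    (∑' n : ℕ, (-1 : ℝ) ^ n / (2 * (n : ℝ) + 1) ^ 2)

open Real

lemma summable_one_div_two_mul_add_one_sq :
    Summable fun n : ℕ => (1 : ℝ) / (2 * (n : ℝ) + 1) ^ 2 := by
  have h : Summable fun n : ℕ => (1 : ℝ) / ((n : ℝ) + 1) ^ 2 := by
    simpa using (summable_nat_add_iff 1).mpr (Real.summable_one_div_nat_pow.mpr one_lt_two)
  refine h.of_nonneg_of_le (fun n => by positivity) fun n => ?_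
  gcongr
  linarith [n.cast_nonneg (α := ℝ)]

lemma tsum_neg_one_pow_div_two_mul_add_one_sq_nonneg :
    0 ≤ ∑' n : ℕ, (-1 : ℝ) ^ n / (2 * (n : ℝ) + 1) ^ 2 := by
  have hanti : Antitone fun n : ℕ => (1 : ℝ) / (2 * (n : ℝ) + 1) ^ 2 := fun m n hmn => by
    have : (m : ℝ) ≤ n := by exact_mod_cast hmn
    exact one_div_le_one_div_of_le (by positivity) (by gcongr)
  have hsum : Summable fun n : ℕ => (-1 : ℝ) ^ n * (1 / (2 * (n : ℝ) + 1) ^ 2) :=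
    .of_norm (by simpa using summable_one_div_two_mul_add_one_sq)
  simpa [div_eq_mul_inv] using hanti.alternating_series_le_tendsto hsum.hasSum.tendsto_sum_nat 0

lemma kolmogorovK_nonneg : 0 ≤ kolmogorovK :=
  div_nonneg (tsum_nonneg fun _ => by positivity) tsum_neg_one_pow_div_two_mul_add_one_sq_nonneg

theorem lintegral_comp_le_of_meas_le_div {α : Type*} [MeasurableSpace α] {μ : Measure α}
    {f : α → ℝ} (hf_nn : 0 ≤ᵐ[μ] f) (hf : AEMeasurable f μ) {g : ℝ → ℝ}
    (hg_int : ∀ t > 0, IntervalIntegrable g volume 0 t) (hg_nn : ∀ t > 0, 0 ≤ g t) {C : ℝ}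
    (hweak : ∀ t > 0, μ {a | t ≤ f a} ≤ ENNReal.ofReal (C / t)) :
    ∫⁻ a, ENNReal.ofReal (∫ t in 0..f a, g t) ∂μ ≤
      ∫⁻ t in Ioi 0, ENNReal.ofReal (C / t * g t) := by
  rw [lintegral_comp_eq_lintegral_meas_le_mul μ hf_nn hf hg_int
    (ae_restrict_of_forall_mem measurableSet_Ioi hg_nn)]
  refine setLIntegral_mono' measurableSet_Ioi fun t ht => ?_
  rw [ENNReal.ofReal_mul' (hg_nn t ht)]
  gcongr
  exact hweak t ht

lemma sin_min_pi_nonneg {t : ℝ} (ht : 0 ≤ t) : 0 ≤ sin (min t π) :=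
  sin_nonneg_of_nonneg_of_le_pi (le_min ht pi_pos.le) (min_le_right _ _)

lemma integral_sin_min_pi {x : ℝ} (hx : 0 ≤ x) :
    ∫ t in 0..x, sin (min t π) = 1 - cos (min x π) := by
  have hcont : Continuous fun t => sin (min t π) := by fun_prop
  rcases le_total x π with h | h
  · rw [min_eq_left h, intervalIntegral.integral_congr (g := sin) fun t ht => ?_, integral_sin,
      cos_zero]
    rw [uIcc_of_le hx] at ht
    rw [min_eq_left (ht.2.trans h)]
  · rw [min_eq_right h, ← intervalIntegral.integral_add_adjacent_intervals
      (hcont.intervalIntegrable 0 π) (hcont.intervalIntegrable π x),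
      intervalIntegral.integral_congr (a := 0) (b := π) (g := sin) fun t ht => ?_,
      intervalIntegral.integral_congr (a := π) (b := x) (g := fun _ => 0) fun t ht => ?_]
    · simp [integral_sin]
    · rw [uIcc_of_le h] at ht
      simp [min_eq_right ht.1]
    · rw [uIcc_of_le pi_pos.le] at ht
      rw [min_eq_left ht.2]

lemma one_sub_cos_le_integral_sin_min_pi (u : ℝ) :
    1 - cos u ≤ ∫ t in 0..|u|, sin (min t π) := by
  rw [integral_sin_min_pi (abs_nonneg u)]
  rcases le_total |u| π with h | h
  · rw [min_eq_left h, cos_abs]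
  · rw [min_eq_right h, cos_pi]
    linarith [neg_one_le_cos u]

lemma integrableOn_sin_div_Ioc (a : ℝ) : IntegrableOn (fun t => sin t / t) (Ioc 0 a) :=
  (continuous_sinc.integrableOn_Icc.mono_set Ioc_subset_Icc_self).congr_fun
    (fun _ ht => sinc_of_ne_zero ht.1.ne') measurableSet_Ioc

lemma lintegral_div_mul_sin_min_pi {C : ℝ} (hC : 0 ≤ C) :
    ∫⁻ t in Ioi 0, ENNReal.ofReal (C / t * sin (min t π)) =
      ENNReal.ofReal (C * ∫ t in 0..π, sin t / t) := by
  have hpi : ∫⁻ t in Ioi π, ENNReal.ofReal (C / t * sin (min t π)) = 0 := by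
    rw [setLIntegral_congr_fun measurableSet_Ioi (g := 0) fun t ht => by
      simp [min_eq_right (le_of_lt (mem_Ioi.mp ht))], lintegral_zero_fun]
  rw [← Ioc_union_Ioi_eq_Ioi pi_pos.le,
    lintegral_union measurableSet_Ioi (Ioc_disjoint_Ioi le_rfl), hpi,
    add_zero, setLIntegral_congr_fun measurableSet_Ioc
      (g := fun t => ENNReal.ofReal (C * (sin t / t))) fun t ht => by
        rw [min_eq_left ht.2]; ring_nf,
    ← ofReal_integral_eq_lintegral_ofReal ((integrableOn_sin_div_Ioc π).const_mul C)
      (ae_restrict_of_forall_mem measurableSet_Ioc fun t ht =>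
        mul_nonneg hC (div_nonneg (sin_nonneg_of_nonneg_of_le_pi ht.1.le ht.2) ht.1.le)),
    integral_const_mul, intervalIntegral.integral_of_le pi_pos.le]

/-- Lemma 4: `∫ (1 − cos ψ̃) ≤ 2 K₀ ‖ψ‖₁`, where `K₀ = (kolmogorovK/2) ∫₀^π sin λ/λ dλ`
and `kolmogorovK` is the Kolmogorov weak (1,1) constant of the conjugation operator `T`. -/
theorem stmt6
    (T : (ℝ → ℝ) → (ℝ → ℝ))
    (hweak : ∀ φ : ℝ → ℝ, IntegrableOn φ (Ico (-Real.pi) Real.pi) →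
      ∀ lam > (0 : ℝ),
        volume {θ ∈ Ico (-Real.pi) Real.pi | lam ≤ |T φ θ|} ≤
          ENNReal.ofReal ((kolmogorovK / lam) * ∫ θ in Ico (-Real.pi) Real.pi, |φ θ|))
    (ψ : ℝ → ℝ) (hψ : IntegrableOn ψ (Ico (-Real.pi) Real.pi))
    (hTmeas : Measurable (T ψ)) :
    ∫ θ in Ico (-Real.pi) Real.pi, (1 - Real.cos (T ψ θ)) ≤
      2 * (kolmogorovK / 2 * ∫ lam in (0 : ℝ)..Real.pi, Real.sin lam / lam) *
        ∫ θ in Ico (-Real.pi) Real.pi, |ψ θ| := by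
  set E := Ico (-π) π
  set I := ∫ θ in E, |ψ θ|
  set J := ∫ t in (0 : ℝ)..π, sin t / t
  have hI : 0 ≤ I := integral_nonneg fun _ => abs_nonneg _
  have hJ : 0 ≤ J := intervalIntegral.integral_nonneg pi_pos.le fun t ht =>
    div_nonneg (sin_nonneg_of_nonneg_of_le_pi ht.1 ht.2) ht.1
  have hK := kolmogorovK_nonneg
  have hdist : ∀ t > 0, volume.restrict E {θ | t ≤ |T ψ θ|} ≤
      ENNReal.ofReal (kolmogorovK * I / t) := fun t ht => by
    rw [Measure.restrict_apply' measurableSet_Ico, inter_comm, inter_ofPred_eq_sep,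
      mul_div_right_comm]
    exact hweak ψ hψ t ht
  have hcont : Continuous fun t => sin (min t π) := by fun_prop
  have hlayer := lintegral_comp_le_of_meas_le_div (ae_of_all _ fun θ => abs_nonneg (T ψ θ))
    hTmeas.abs.aemeasurable (fun t _ => hcont.intervalIntegrable 0 t)
    (fun _ ht => sin_min_pi_nonneg ht.le) hdist
  rw [lintegral_div_mul_sin_min_pi (by positivity)] at hlayer
  rw [integral_eq_lintegral_of_nonneg_ae (ae_of_all _ fun θ => sub_nonneg.2 (cos_le_one _))
    (by fun_prop)]
  calc _ ≤ kolmogorovK * I * J := ENNReal.toReal_le_of_le_ofReal (by positivity)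
        ((lintegral_mono fun θ => ENNReal.ofReal_le_ofReal
          (one_sub_cos_le_integral_sin_min_pi (T ψ θ))).trans hlayer)
    _ = _ := by ring
end

section
/- The constant K₀ := (K/2) ∫₀^π (sin λ)/λ dλ satisfies K₀ < 1.25, where K = (1 + 3^{-2} + 5^{-2} + ⋯)/(1 − 3^{-2} + 5^{-2} − ⋯) ≈ 1.347 is the best constant in Kolmogorov's weak (1,1) inequality for the conjugate function. -/
/-!
The numerator is `π²/8`, the odd part of `ζ(2)`, and the denominator is Catalan's constant `G`,
which exceeds its alternating partial sum of twelve terms, `0.9151…`.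

On `[0, ∞)` the Taylor polynomials of `sin` and `cos` alternately over- and underestimate them:
each error is `0` at `0` and its derivative is `±` the error of the other function one degree
lower, starting from `1 - cos x ≥ 0`. Hence `sin x ≤ x - x³/3! + ⋯ + x⁹/9!`, and dividing by
`x` and integrating gives `Si(π) < 1.8526`. Finally
`K₀ = π² Si(π) / (16 G) < 9.8697 · 1.8526 / 14.64 < 1.25`.
-/

open MeasureTheory Real Finset Nat

noncomputable def sinTaylor (n : ℕ) (x : ℝ) : ℝ :=
  ∑ k ∈ range n, (-1) ^ k * x ^ (2 * k + 1) / (2 * k + 1)!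

noncomputable def cosTaylor (n : ℕ) (x : ℝ) : ℝ :=
  ∑ k ∈ range n, (-1) ^ k * x ^ (2 * k) / (2 * k)!

lemma hasDerivAt_sinTaylor (n : ℕ) (x : ℝ) :
    HasDerivAt (sinTaylor n) (cosTaylor n x) x := by
  unfold sinTaylor cosTaylor
  refine HasDerivAt.fun_sum fun k _ => ?_
  refine (((hasDerivAt_pow (2 * k + 1) x).const_mul ((-1 : ℝ) ^ k)).div_const
    ((2 * k + 1)! : ℝ)).congr_deriv ?_
  rw [Nat.factorial_succ]
  push_cast
  field_simp

lemma hasDerivAt_cosTaylor_succ (n : ℕ) (x : ℝ) :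
    HasDerivAt (cosTaylor (n + 1)) (-sinTaylor n x) x := by
  induction n with
  | zero =>
    have hconst : cosTaylor 1 = fun _ => 1 := by ext; simp [cosTaylor]
    simpa [hconst, sinTaylor] using hasDerivAt_const x (1 : ℝ)
  | succ n ih =>
    have hterm := ((hasDerivAt_pow (2 * (n + 1)) x).const_mul ((-1 : ℝ) ^ (n + 1))).div_const
      ((2 * (n + 1))! : ℝ)
    have hsum := ih.add hterm
    unfold cosTaylor sinTaylor at hsum ⊢
    simp_rw [sum_range_succ (n := n + 1)]
    refine hsum.congr_deriv ?_
    rw [sum_range_succ, show 2 * (n + 1) = 2 * n + 1 + 1 by ring, Nat.factorial_succ]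
    push_cast
    field_simp
    ring

lemma nonneg_of_hasDerivAt_of_nonneg {f f' : ℝ → ℝ} (hf : ∀ x, HasDerivAt f (f' x) x)
    (hf' : ∀ x, 0 ≤ x → 0 ≤ f' x) (h0 : f 0 = 0) {x : ℝ} (hx : 0 ≤ x) : 0 ≤ f x := by
  have hmono : MonotoneOn f (Set.Ici 0) :=
    monotoneOn_of_hasDerivWithinAt_nonneg (convex_Ici 0)
      (fun y _ => (hf y).continuousAt.continuousWithinAt) (fun y _ => (hf y).hasDerivWithinAt)
      (fun y hy => hf' y (interior_subset hy))
  simpa [h0] using hmono Set.self_mem_Ici hx hx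

lemma neg_one_pow_mul_sinTaylor_sub_sin_nonneg_of_cos {n : ℕ}
    (hcos : ∀ x, 0 ≤ x → 0 ≤ (-1) ^ n * (cosTaylor (n + 1) x - cos x))
    {x : ℝ} (hx : 0 ≤ x) :
    0 ≤ (-1) ^ n * (sinTaylor (n + 1) x - sin x) :=
  nonneg_of_hasDerivAt_of_nonneg
    (fun y => ((hasDerivAt_sinTaylor _ y).sub (hasDerivAt_sin y)).const_mul _) hcos
    (by simp [sinTaylor]) hx

lemma neg_one_pow_mul_cosTaylor_sub_cos_nonneg (n : ℕ) {x : ℝ} (hx : 0 ≤ x) :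
    0 ≤ (-1) ^ n * (cosTaylor (n + 1) x - cos x) := by
  induction n generalizing x with
  | zero => simpa [cosTaylor] using cos_le_one x
  | succ n ih =>
    refine nonneg_of_hasDerivAt_of_nonneg
      (fun y => ((hasDerivAt_cosTaylor_succ _ y).sub (hasDerivAt_cos y)).const_mul _)
      (fun y hy => ?_) (by simp [cosTaylor, sum_range_succ']) hx
    linear_combination neg_one_pow_mul_sinTaylor_sub_sin_nonneg_of_cos (fun _ h => ih h) hy

lemma sin_le_sinTaylor (m : ℕ) {x : ℝ} (hx : 0 ≤ x) : sin x ≤ sinTaylor (2 * m + 1) x := by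
  have := neg_one_pow_mul_sinTaylor_sub_sin_nonneg_of_cos
    (fun _ hy => neg_one_pow_mul_cosTaylor_sub_cos_nonneg (2 * m) hy) hx
  simpa [pow_mul] using this

noncomputable def sineIntegralTaylor (n : ℕ) (a : ℝ) : ℝ :=
  ∑ k ∈ range n, (-1) ^ k * a ^ (2 * k + 1) / ((2 * k + 1) * (2 * k + 1)!)

lemma integral_sin_div_le_sineIntegralTaylor (m : ℕ) {a : ℝ} (ha : 0 ≤ a) :
    ∫ x in 0..a, sin x / x ≤ sineIntegralTaylor (2 * m + 1) a := by
  set g : ℝ → ℝ := fun x => ∑ k ∈ range (2 * m + 1), (-1) ^ k * x ^ (2 * k) / (2 * k + 1)!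
  have hsinTaylor : ∀ x, sinTaylor (2 * m + 1) x = x * g x := fun x => by
    simp only [sinTaylor, g, mul_sum]
    exact sum_congr rfl fun k _ => by ring
  have hg : ∫ x in 0..a, g x = sineIntegralTaylor (2 * m + 1) a := by
    simp only [g, sineIntegralTaylor]
    rw [intervalIntegral.integral_finsetSum fun k _ =>
      (by fun_prop : Continuous _).intervalIntegrable _ _]
    refine sum_congr rfl fun k _ => ?_
    simp only [mul_div_assoc, intervalIntegral.integral_const_mul, intervalIntegral.integral_div,
      integral_pow]
    push_cast
    field_simp
    ring
  have hsinc : IntervalIntegrable (fun x => sin x / x) volume 0 a :=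
    (continuous_sinc.intervalIntegrable 0 a).congr fun x hx =>
      sinc_of_ne_zero (by rw [Set.uIoc_of_le ha] at hx; exact hx.1.ne')
  rw [← hg]
  refine intervalIntegral.integral_mono_on_of_le_Ioo ha hsinc
    ((by fun_prop : Continuous g).intervalIntegrable _ _) fun x hx => ?_
  rw [div_le_iff₀ hx.1, mul_comm, ← hsinTaylor]
  exact sin_le_sinTaylor m hx.1.le

lemma sineIntegralTaylor_five_pi_lt : sineIntegralTaylor 5 π < 1.8526 := by
  have hlo : ∀ k, (3.141592 : ℝ) ^ k ≤ π ^ k := fun k =>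
    pow_le_pow_left₀ (by norm_num) pi_gt_d6.le k
  have hhi : ∀ k, π ^ k ≤ (3.141593 : ℝ) ^ k := fun k =>
    pow_le_pow_left₀ pi_pos.le pi_lt_d6.le k
  have h3 := hlo 3
  have h5 := hhi 5
  have h7 := hlo 7
  have h9 := hhi 9
  norm_num [sineIntegralTaylor, sum_range_succ, Nat.factorial] at h3 h5 h7 h9 ⊢
  linarith [pi_lt_d6]

lemma summable_one_div_odd_sq : Summable fun n : ℕ => 1 / (2 * (n : ℝ) + 1) ^ 2 := by
  have h := (Real.summable_one_div_nat_pow.mpr one_lt_two).comp_injective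
    (i := fun n : ℕ => 2 * n + 1) fun a b hab => by simpa using hab
  simpa [Function.comp_def] using h

lemma hasSum_one_div_odd_sq : HasSum (fun n : ℕ => 1 / (2 * (n : ℝ) + 1) ^ 2) (π ^ 2 / 8) := by
  have heven : HasSum (fun n : ℕ => 1 / ((2 * n : ℕ) : ℝ) ^ 2) (π ^ 2 / 24) := by
    rw [show π ^ 2 / 24 = 1 / 4 * (π ^ 2 / 6) by ring]
    refine (hasSum_zeta_two.mul_left (1 / 4)).congr_fun fun n => ?_
    push_cast
    ring
  have hodd : HasSum (fun n : ℕ => 1 / ((2 * n + 1 : ℕ) : ℝ) ^ 2)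
      (∑' n : ℕ, 1 / (2 * (n : ℝ) + 1) ^ 2) :=
    summable_one_div_odd_sq.hasSum.congr_fun fun n => by push_cast; rfl
  have htotal :=
    (HasSum.even_add_odd (f := fun n : ℕ => 1 / (n : ℝ) ^ 2) heven hodd).unique hasSum_zeta_two
  convert summable_one_div_odd_sq.hasSum using 1
  linarith

lemma tsum_neg_one_pow_div_odd_sq_gt :
    (0.915 : ℝ) < ∑' n : ℕ, (-1) ^ n / (2 * (n : ℝ) + 1) ^ 2 := by
  have hanti : Antitone fun n : ℕ => 1 / (2 * (n : ℝ) + 1) ^ 2 := fun a b hab => by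
    have : (a : ℝ) ≤ b := by exact_mod_cast hab
    dsimp only
    gcongr
  have h := hanti.alternating_series_le_tendsto
    summable_one_div_odd_sq.tendsto_alternating_series_tsum 6
  simp only [mul_one_div] at h
  refine lt_of_lt_of_le ?_ h
  norm_num [sum_range_succ]

/-- `K₀ := (K/2) ∫₀^π sin λ/λ dλ < 1.25`, where
`K = (1 + 3⁻² + 5⁻² + ⋯)/(1 − 3⁻² + 5⁻² − ⋯)` is the best constant in
Kolmogorov's weak (1,1) inequality for the conjugate function. -/
theorem stmt7 :
    ((∑' n : ℕ, (1 : ℝ) / (2 * (n : ℝ) + 1) ^ 2) /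
        (∑' n : ℕ, (-1 : ℝ) ^ n / (2 * (n : ℝ) + 1) ^ 2)) / 2 *
      ∫ lam in (0 : ℝ)..Real.pi, Real.sin lam / lam < 1.25 := by
  have hSi : ∫ x in 0..π, sin x / x < 1.8526 :=
    (integral_sin_div_le_sineIntegralTaylor 2 pi_pos.le).trans_lt sineIntegralTaylor_five_pi_lt
  have hG := tsum_neg_one_pow_div_odd_sq_gt
  have hpi : π ^ 2 < 9.8697 := by nlinarith [pi_lt_d4, pi_pos]
  rw [hasSum_one_div_odd_sq.tsum_eq]
  set G := ∑' n : ℕ, (-1 : ℝ) ^ n / (2 * (n : ℝ) + 1) ^ 2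
  have hG0 : 0 < G := by linarith
  have hcoef : 0 < π ^ 2 / 8 / G / 2 := by positivity
  calc π ^ 2 / 8 / G / 2 * ∫ x in 0..π, sin x / x
      < π ^ 2 / 8 / G / 2 * 1.8526 := mul_lt_mul_of_pos_left hSi hcoef
    _ < 1.25 := by
      rw [div_div, div_div, div_mul_eq_mul_div, div_lt_iff₀ (by positivity)]
      linarith
end

section
/- Let f, g ≥ 0 be integrable functions on the unit circle with log f, log g ∈ L¹, and let f⁺, g⁺ be their outer spectral factors normalized positive at 0 (so |f⁺|² = f, |g⁺|² = g a.e.). Then ‖f⁺ − g⁺‖²_{H²} = ‖(f^{1/2} − g^{1/2})²‖_{L¹} + 2∫_{-π}^{π} f^{1/2} (g^{1/2} − f^{1/2}) (1 − cos((1/2)(log f − log g)~)) dθ + 2∫_{-π}^{π} f (1 − cos((1/2)(log f − log g)~)) dθ. -/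
open MeasureTheory Set

/-!
Pointwise, `F - G` is a difference of two vectors of lengths `√f, √g` at angle `(A - B)/2`, so the
law of cosines gives `‖F - G‖² = f + g - 2√f√g cos((A - B)/2)`, and this regroups algebraically
into the three integrands. Since `√f, √g ∈ L²` and `1 - cos` is bounded by `2`, each of them is
integrable, so the integral splits termwise.
-/

theorem norm_ofReal_mul_exp_sub_sq (a b u v : ℝ) :
    ‖(a : ℂ) * Complex.exp (u * Complex.I) - (b : ℂ) * Complex.exp (v * Complex.I)‖ ^ 2 =
      a ^ 2 + b ^ 2 - 2 * a * b * Real.cos (u - v) := by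
  rw [Complex.sq_norm, Complex.normSq_sub, ← Complex.sq_norm, ← Complex.sq_norm]
  simp only [norm_mul, Complex.norm_exp_ofReal_mul_I, Complex.norm_real, Real.norm_eq_abs,
    mul_one, sq_abs, map_mul, Complex.conj_ofReal]
  have hprod : (a : ℂ) * Complex.exp (u * Complex.I) *
      (b * (starRingEnd ℂ) (Complex.exp (v * Complex.I))) =
      ((a * b : ℝ) : ℂ) * Complex.exp ((u - v : ℝ) * Complex.I) := by
    rw [← Complex.exp_conj, map_mul, Complex.conj_ofReal, Complex.conj_I]
    push_cast
    rw [sub_mul, sub_eq_add_neg, Complex.exp_add]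
    ring_nf
  rw [hprod, Complex.re_ofReal_mul, Complex.exp_ofReal_mul_I_re]
  ring

theorem memLp_two_sqrt {α : Type*} [MeasurableSpace α] {μ : Measure α} {f : α → ℝ}
    (hf : Integrable f μ) (hf0 : ∀ᵐ x ∂μ, 0 ≤ f x) : MemLp (fun x => √(f x)) 2 μ := by
  refine (memLp_two_iff_integrable_sq ?_).2 (hf.congr ?_)
  · exact Real.continuous_sqrt.comp_aestronglyMeasurable hf.aestronglyMeasurable
  · filter_upwards [hf0] with x hx using (Real.sq_sqrt hx).symm

theorem norm_sqrt_mul_exp_sub_sq {a : ℝ} (ha : 0 ≤ a) (b x y : ℝ) :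
    ‖(√a : ℂ) * Complex.exp (Complex.I * x / 2) - (√b : ℂ) * Complex.exp (Complex.I * y / 2)‖ ^ 2 =
      (√a - √b) ^ 2 + 2 * (√a * (√b - √a) * (1 - Real.cos ((x - y) / 2))) +
        2 * (a * (1 - Real.cos ((x - y) / 2))) := by
  have hangle (t : ℝ) : Complex.I * t / 2 = (t / 2 : ℝ) * Complex.I := by push_cast; ring
  rw [hangle, hangle, norm_ofReal_mul_exp_sub_sq, ← sub_div]
  linear_combination (2 * (1 - Real.cos ((x - y) / 2))) * Real.sq_sqrt ha

theorem stmt9_general (f g : ℝ → ℝ)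
    (hf0 : ∀ θ, 0 ≤ f θ) (hg0 : ∀ θ, 0 ≤ g θ)
    (hf : IntegrableOn f (Ico (-Real.pi) Real.pi))
    (hg : IntegrableOn g (Ico (-Real.pi) Real.pi))
    (A B : ℝ → ℝ) (hA : Measurable A) (hB : Measurable B)
    (F G : ℝ → ℂ)
    (hF : ∀ θ, F θ = (Real.sqrt (f θ) : ℂ) * Complex.exp (Complex.I * (A θ : ℂ) / 2))
    (hG : ∀ θ, G θ = (Real.sqrt (g θ) : ℂ) * Complex.exp (Complex.I * (B θ : ℂ) / 2)) :
    ∫ θ in Ico (-Real.pi) Real.pi, ‖F θ - G θ‖ ^ 2 =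
      (∫ θ in Ico (-Real.pi) Real.pi, (Real.sqrt (f θ) - Real.sqrt (g θ)) ^ 2) +
      2 * (∫ θ in Ico (-Real.pi) Real.pi,
        Real.sqrt (f θ) * (Real.sqrt (g θ) - Real.sqrt (f θ)) *
          (1 - Real.cos ((A θ - B θ) / 2))) +
      2 * ∫ θ in Ico (-Real.pi) Real.pi,
        f θ * (1 - Real.cos ((A θ - B θ) / 2)) := by
  set μ := volume.restrict (Ico (-Real.pi) Real.pi)
  have hc_meas : AEStronglyMeasurable (fun θ => 1 - Real.cos ((A θ - B θ) / 2)) μ :=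
    (measurable_const.sub ((hA.sub hB).div_const 2).cos).aestronglyMeasurable
  have hc_bound : ∀ᵐ θ ∂μ, ‖1 - Real.cos ((A θ - B θ) / 2)‖ ≤ 2 :=
    ae_of_all _ fun θ => by
      rw [Real.norm_eq_abs, abs_le]
      constructor <;> linarith [Real.cos_le_one ((A θ - B θ) / 2),
        Real.neg_one_le_cos ((A θ - B θ) / 2)]
  have hsqrt_f := memLp_two_sqrt hf (ae_of_all _ hf0)
  have hsqrt_g := memLp_two_sqrt hg (ae_of_all _ hg0)
  have hsq : Integrable (fun θ => (√(f θ) - √(g θ)) ^ 2) μ := (hsqrt_f.sub hsqrt_g).integrable_sq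
  have hcross : Integrable (fun θ => 2 * (√(f θ) * (√(g θ) - √(f θ)) *
      (1 - Real.cos ((A θ - B θ) / 2)))) μ :=
    ((hsqrt_f.integrable_mul (hsqrt_g.sub hsqrt_f)).mul_bdd hc_meas hc_bound).const_mul 2
  have hf_cos : Integrable (fun θ => 2 * (f θ * (1 - Real.cos ((A θ - B θ) / 2)))) μ :=
    (hf.mul_bdd hc_meas hc_bound).const_mul 2
  simp only [hF, hG, norm_sqrt_mul_exp_sub_sq (hf0 _)]
  rw [integral_add ?_ hf_cos, integral_add hsq hcross, integral_const_mul, integral_const_mul]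
  exact hsq.add hcross

/-- Exact `H²` identity for the difference of spectral factors. Here `F, G` are
the boundary values of the outer spectral factors `f⁺, g⁺`, i.e.
`F = √f exp((i/2)(log f)~)` and `G = √g exp((i/2)(log g)~)`, with `A = (log f)~`
and `B = (log g)~` the harmonic conjugates (so `(log f − log g)~ = A − B`).
Then `‖f⁺ − g⁺‖²_{H²} = ‖(√f − √g)²‖_{L¹}
  + 2∫ √f(√g − √f)(1 − cos(½(log f − log g)~))
  + 2∫ f(1 − cos(½(log f − log g)~))`. -/
theorem stmt9 (f g : ℝ → ℝ)
    (hf0 : ∀ θ, 0 ≤ f θ) (hg0 : ∀ θ, 0 ≤ g θ)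
    (hf : IntegrableOn f (Ico (-Real.pi) Real.pi))
    (hg : IntegrableOn g (Ico (-Real.pi) Real.pi))
    (hlogf : IntegrableOn (fun θ => Real.log (f θ)) (Ico (-Real.pi) Real.pi))
    (hlogg : IntegrableOn (fun θ => Real.log (g θ)) (Ico (-Real.pi) Real.pi))
    (A B : ℝ → ℝ) (hA : Measurable A) (hB : Measurable B)
    (F G : ℝ → ℂ)
    (hF : ∀ θ, F θ = (Real.sqrt (f θ) : ℂ) * Complex.exp (Complex.I * (A θ : ℂ) / 2))
    (hG : ∀ θ, G θ = (Real.sqrt (g θ) : ℂ) * Complex.exp (Complex.I * (B θ : ℂ) / 2)) :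
    ∫ θ in Ico (-Real.pi) Real.pi, ‖F θ - G θ‖ ^ 2 =
      (∫ θ in Ico (-Real.pi) Real.pi, (Real.sqrt (f θ) - Real.sqrt (g θ)) ^ 2) +
      2 * (∫ θ in Ico (-Real.pi) Real.pi,
        Real.sqrt (f θ) * (Real.sqrt (g θ) - Real.sqrt (f θ)) *
          (1 - Real.cos ((A θ - B θ) / 2))) +
      2 * ∫ θ in Ico (-Real.pi) Real.pi,
        f θ * (1 - Real.cos ((A θ - B θ) / 2)) :=
  stmt9_general f g hf0 hg0 hf hg A B hA hB F G hF hG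
end
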